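/- Let B_p = ℚ_p ⋊ ℤ, where the generator of ℤ acts on ℚ_p by multiplication by p. Every continuous homomorphism f : B_p → G to a totally disconnected locally compact group G either restricts trivially to ℚ_p, or is a topological isomorphism onto its closed image (in particular f is proper). -/

import Mathlib

/-!
Let `F` be the restriction of `f` to `ℚ_p`, and suppose `F ≠ 1`. Conjugation by the generator
of `ℤ` acts on `ℚ_p` as multiplication by `p`, so `f(g) F(x) f(g)⁻¹ = F(p^k x)` where `k` is the
`ℤ`-component of `g`. Closed subgroups of `ℚ_p` are `ℤ_p`-modules, so an unbounded closed
subgroup is all of `ℚ_p`; a closed subgroup containing `x ≠ 0` and stable under scaling by an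
element of norm `> 1` is unbounded. Hence `ker F`, which is stable under `p⁻¹`, is trivial, and the
conjugation formula then makes `f` injective.

By van Dantzig, `G` has a compact open subgroup `U`. The open subgroup `W = F⁻¹(U)` is not all of
`ℚ_p`, since `ℚ_p` is divisible and so maps trivially to a compact totally disconnected group
(every open subgroup has finite index there). So `W` is bounded, hence compact. An element
`g ∈ f⁻¹(U)` normalises `W`, so a nonzero `k` would make `W` stable under a scaling of norm `> 1`;
thus `f⁻¹(U) ⊆ ℚ_p` equals the compact set `W`. Covering a compact set of `G` by finitely many
cosets of `U` shows that `f` is proper, and a proper injective map is a closed embedding.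
-/

open Topology

/-- Transporting additive automorphisms to multiplicative automorphisms, as a group
homomorphism. -/
def addAutToMulAut (A : Type*) [AddGroup A] :
    Multiplicative (AddAut A) →* MulAut (Multiplicative A) where
  toFun e := AddEquiv.toMultiplicative e.toAdd
  map_one' := by ext x; rfl
  map_mul' e₁ e₂ := by ext x; rfl

/-- `p` as a unit of `ℚ_[p]`. -/
noncomputable def pUnit (p : ℕ) [hp : Fact p.Prime] : ℚ_[p]ˣ :=
  Units.mk0 (p : ℚ_[p]) (by exact_mod_cast hp.out.ne_zero)

/-- The action of `ℤ` on `ℚ_p` where the generator acts by multiplication by `p`. -/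
noncomputable def phiP (p : ℕ) [Fact p.Prime] :
    Multiplicative ℤ →* MulAut (Multiplicative ℚ_[p]) :=
  (addAutToMulAut ℚ_[p]).comp ((AddAut.mulLeft).comp (zpowersHom ℚ_[p]ˣ (pUnit p)))

/-- The group `B_p = ℚ_p ⋊ ℤ`, with the generator of `ℤ` acting by multiplication
by `p`. -/
noncomputable def Bp (p : ℕ) [Fact p.Prime] :=
  SemidirectProduct (Multiplicative ℚ_[p]) (Multiplicative ℤ) (phiP p)

noncomputable instance (p : ℕ) [Fact p.Prime] : Group (Bp p) :=
  inferInstanceAs (Group (SemidirectProduct _ _ (phiP p)))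

/-- The product topology on `B_p = ℚ_p ⋊ ℤ`, making `ℤ_p` a compact open subgroup. -/
noncomputable instance (p : ℕ) [Fact p.Prime] : TopologicalSpace (Bp p) :=
  TopologicalSpace.induced
    (fun x : SemidirectProduct (Multiplicative ℚ_[p]) (Multiplicative ℤ) (phiP p) =>
      (x.left, x.right)) inferInstance

open Pointwise Filter Bornology

theorem AddSubgroup.not_isBounded_of_mul_mem {K : Type*} [NormedDivisionRing K]
    (S : AddSubgroup K) {x c : K} (hx : x ∈ S) (hx0 : x ≠ 0) (hc : 1 < ‖c‖)
    (hcS : ∀ y ∈ S, c * y ∈ S) : ¬ IsBounded (S : Set K) := by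
  rw [isBounded_iff_forall_norm_le]
  rintro ⟨C, hC⟩
  have hpow (n : ℕ) : c ^ n * x ∈ S := by
    induction n with
    | zero => simpa using hx
    | succ n ih => simpa [pow_succ', mul_assoc] using hcS _ ih
  obtain ⟨n, hn⟩ := pow_unbounded_of_one_lt (C / ‖x‖) hc
  have hle := hC _ (hpow n)
  rw [norm_mul, norm_pow] at hle
  rw [div_lt_iff₀ (norm_pos_iff.2 hx0)] at hn
  linarith

theorem AddSubgroup.exists_ne_zero_mem_of_isOpen {K : Type*} [NontriviallyNormedField K]
    (S : AddSubgroup K) (hS : IsOpen (S : Set K)) : ∃ x ∈ S, x ≠ 0 :=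
  have hmem : ∀ᶠ x in 𝓝[≠] (0 : K), x ∈ S := mem_nhdsWithin_of_mem_nhds (hS.mem_nhds S.zero_mem)
  (hmem.and self_mem_nhdsWithin).exists

theorem Subgroup.eq_top_of_index_ne_zero_of_charZero {K : Type*} [DivisionRing K] [CharZero K]
    {H : Subgroup (Multiplicative K)} (hH : H.index ≠ 0) : H = ⊤ := by
  refine eq_top_iff.2 fun x _ => ?_
  have hx : (Multiplicative.ofAdd (x.toAdd / H.index)) ^ H.index = x := by
    rw [← ofAdd_nsmul, nsmul_eq_mul', div_mul_cancel₀ _ (Nat.cast_ne_zero.2 hH)]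
    rfl
  exact hx ▸ H.pow_index_mem _

namespace Padic

variable {p : ℕ} [Fact p.Prime]

theorem coe_mul_mem_of_isClosed {S : AddSubgroup ℚ_[p]} (hS : IsClosed (S : Set ℚ_[p]))
    {x : ℚ_[p]} (hx : x ∈ S) (u : ℤ_[p]) : (u : ℚ_[p]) * x ∈ S :=
  PadicInt.denseRange_intCast.induction_on u
    (hS.preimage ((continuous_subtype_val (p := fun y : ℚ_[p] => ‖y‖ ≤ 1)).mul continuous_const))
    fun n => by simpa [zsmul_eq_mul] using S.zsmul_mem hx n

theorem eq_top_of_isClosed_of_not_isBounded {S : AddSubgroup ℚ_[p]}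
    (hS : IsClosed (S : Set ℚ_[p])) (hb : ¬ IsBounded (S : Set ℚ_[p])) : S = ⊤ := by
  refine eq_top_iff.2 fun y _ => ?_
  rw [isBounded_iff_forall_norm_le] at hb
  push Not at hb
  obtain ⟨w, hw, hyw⟩ := hb ‖y‖
  have hw0 : w ≠ 0 := by
    rintro rfl
    simp only [norm_zero] at hyw
    linarith [norm_nonneg y]
  have hu : ‖y / w‖ ≤ 1 := by
    rw [norm_div, div_le_one ((norm_nonneg y).trans_lt hyw)]
    exact hyw.le
  simpa [div_mul_cancel₀ _ hw0] using coe_mul_mem_of_isClosed hS hw ⟨y / w, hu⟩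

end Padic

theorem MonoidHom.isCompact_preimage_smul {A G : Type*} [Group A] [TopologicalSpace A]
    [ContinuousMul A] [Group G] (f : A →* G) {U : Subgroup G} (hU : IsCompact (f ⁻¹' U))
    (g : G) : IsCompact (f ⁻¹' (g • (U : Set G))) := by
  rcases (f ⁻¹' (g • (U : Set G))).eq_empty_or_nonempty with h | ⟨z, hz⟩
  · exact h ▸ isCompact_empty
  have hcoset : g • (U : Set G) = f z • (U : Set G) := by
    obtain ⟨u, hu, hgu : g * u = f z⟩ := hz
    rw [← hgu, mul_smul, smul_coe_set hu]
  have hpre : f ⁻¹' (f z • (U : Set G)) = z • f ⁻¹' U := by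
    ext y
    simp [Set.mem_smul_set_iff_inv_smul_mem]
  rw [hcoset, hpre]
  exact hU.smul z

section TopologicalGroup

variable {G : Type*} [Group G] [TopologicalSpace G] [IsTopologicalGroup G]

theorem MonoidHom.isProperMap_of_isCompact_preimage [LocallyCompactSpace G] [T2Space G]
    {A : Type*} [Group A] [TopologicalSpace A] [ContinuousMul A] (f : A →* G) (hf : Continuous f)
    {U : Subgroup G} (hUo : IsOpen (U : Set G)) (hU : IsCompact (f ⁻¹' U)) : IsProperMap f := by
  refine isProperMap_iff_isCompact_preimage.2 ⟨hf, fun K hK => ?_⟩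
  obtain ⟨t, ht⟩ := hK.elim_finite_subcover (fun g : G => g • (U : Set G)) (hUo.smul ·)
    fun k _ => Set.mem_iUnion.2 ⟨k, Set.mem_smul_set.2 ⟨1, U.one_mem, mul_one k⟩⟩
  refine (t.isCompact_biUnion fun g _ => f.isCompact_preimage_smul hU g)
    |>.of_isClosed_subset (hK.isClosed.preimage hf) ?_
  simpa only [Set.preimage_iUnion₂] using Set.preimage_mono ht

theorem exists_isOpen_isCompact_subgroup_subset [LocallyCompactSpace G]
    [TotallyDisconnectedSpace G] {N : Set G} (hN : N ∈ 𝓝 1) :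
    ∃ U : Subgroup G, IsOpen (U : Set G) ∧ IsCompact (U : Set G) ∧ (U : Set G) ⊆ N := by
  obtain ⟨K, hK, hKn⟩ := exists_compact_mem_nhds (1 : G)
  obtain ⟨V, hV, h1V, hVKN⟩ := loc_compact_Haus_tot_disc_of_zero_dim.mem_nhds_iff.1
    (inter_mem hKn hN)
  have hVc : IsCompact V := hK.of_isClosed_subset hV.1 (hVKN.trans Set.inter_subset_left)
  obtain ⟨W, hW, hWV⟩ := compact_open_separated_mul_left hVc hV.2 subset_rfl
  -- the stabilizer of `V` is open because it contains `W ∩ W⁻¹`, and lies in `V` since `1 ∈ V`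
  let U := MulAction.stabilizer G V
  have hsmul (w : G) (hw : w ∈ W) : w • V ⊆ V := (Set.smul_set_subset_smul hw).trans hWV
  have hWU : W ∩ W⁻¹ ⊆ U := fun w hw =>
    MulAction.mem_stabilizer_iff.2 <|
      (hsmul w hw.1).antisymm (Set.subset_smul_set_iff.2 (hsmul _ hw.2))
  have hUo : IsOpen (U : Set G) :=
    U.isOpen_of_mem_nhds (mem_of_superset (inter_mem hW (inv_mem_nhds_one G hW)) hWU)
  have hUV : (U : Set G) ⊆ V := fun g hg => by
    rw [← MulAction.mem_stabilizer_iff.1 hg]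
    exact ⟨1, h1V, mul_one g⟩
  exact ⟨U, hUo, hVc.of_isClosed_subset (U.isClosed_of_isOpen hUo) hUV,
    hUV.trans (hVKN.trans Set.inter_subset_right)⟩

theorem Subgroup.relIndex_ne_zero_of_subset_isCompact [T2Space G] {O : Subgroup G}
    (hO : IsOpen (O : Set G)) {S : Subgroup G} {C : Set G} (hC : IsCompact C)
    (hSC : (S : Set G) ⊆ C) : O.relIndex S ≠ 0 := by
  let L := S.topologicalClosure
  have : CompactSpace L := isCompact_iff_compactSpace.1 (hC.closure_of_subset hSC)
  have : Finite (L ⧸ O.subgroupOf L) :=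
    Subgroup.quotient_finite_of_isOpen _ (hO.preimage continuous_subtype_val)
  exact mt (relIndex_eq_zero_of_le_right S.le_topologicalClosure) index_ne_zero_of_finite

theorem MonoidHom.eq_one_of_range_subset_isCompact [LocallyCompactSpace G]
    [TotallyDisconnectedSpace G] {K : Type*} [DivisionRing K] [CharZero K]
    (F : Multiplicative K →* G) {C : Set G} (hC : IsCompact C) (hFC : Set.range F ⊆ C) :
    F = 1 := by
  ext x
  by_contra hx
  obtain ⟨U, hUo, -, hU⟩ := exists_isOpen_isCompact_subgroup_subset
    (isOpen_compl_singleton.mem_nhds (Ne.symm hx))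
  have hindex : (U.comap F).index ≠ 0 := by
    rw [Subgroup.index_comap]
    exact Subgroup.relIndex_ne_zero_of_subset_isCompact hUo hC (by simpa using hFC)
  have hxU : x ∈ U.comap F := by
    rw [Subgroup.eq_top_of_index_ne_zero_of_charZero hindex]
    trivial
  exact hU hxU rfl

end TopologicalGroup

theorem SemidirectProduct.mul_inl_mul_inv {N H : Type*} [CommGroup N] [Group H]
    {φ : H →* MulAut N} (g : N ⋊[φ] H) (n : N) : g * inl n * g⁻¹ = inl (φ g.right n) := by
  ext <;> simp [mul_comm]

namespace Bp

variable {p : ℕ} [Fact p.Prime]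

open Multiplicative

/- The structure maps of the semidirect product, typed with `Bp p` rather than
`SemidirectProduct _ _ (phiP p)`, so that the group and topology instances of `Bp p` apply. -/

noncomputable def inl : Multiplicative ℚ_[p] →* Bp p := SemidirectProduct.inl

noncomputable def inr : Multiplicative ℤ →* Bp p := SemidirectProduct.inr

noncomputable def left (g : Bp p) : Multiplicative ℚ_[p] := SemidirectProduct.left g

noncomputable def right : Bp p →* Multiplicative ℤ := SemidirectProduct.rightHom

theorem toAdd_phiP_apply (k : Multiplicative ℤ) (x : Multiplicative ℚ_[p]) :
    (phiP p k x).toAdd = (p : ℚ_[p]) ^ k.toAdd * x.toAdd := by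
  change (pUnit p ^ k.toAdd) • x.toAdd = _
  rw [Units.smul_def, Units.val_zpow_eq_zpow_val]
  rfl

theorem left_mul (g h : Bp p) : left (g * h) = left g * phiP p (right g) (left h) := rfl

theorem left_inv (g : Bp p) : left g⁻¹ = phiP p (right g)⁻¹ (left g)⁻¹ := rfl

theorem right_inr (k : Multiplicative ℤ) : right (inr (p := p) k) = k :=
  SemidirectProduct.rightHom_inr k

theorem inl_left_of_right_eq_one {g : Bp p} (hg : right g = 1) : inl (left g) = g :=
  calc inl (left g) = inl (left g) * inr (right g) := by rw [hg, map_one]; exact (mul_one _).symm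
    _ = g := SemidirectProduct.inl_left_mul_inr_right g

theorem mul_inl_mul_inv (g : Bp p) (x : ℚ_[p]) :
    g * inl (ofAdd x) * g⁻¹ = inl (ofAdd ((p : ℚ_[p]) ^ (right g).toAdd * x)) :=
  (SemidirectProduct.mul_inl_mul_inv (φ := phiP p) g _).trans
    (congrArg SemidirectProduct.inl (toAdd.injective (toAdd_phiP_apply _ _)))

theorem map_inl_zpow_mul {G : Type*} [Group G] (f : Bp p →* G) (g : Bp p) (x : ℚ_[p]) :
    f (inl (ofAdd ((p : ℚ_[p]) ^ (right g).toAdd * x))) = f g * f (inl (ofAdd x)) * (f g)⁻¹ := by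
  rw [← mul_inl_mul_inv, map_mul, map_mul, map_inv]

theorem continuous_iff {X : Type*} [TopologicalSpace X] {h : X → Bp p} :
    Continuous h ↔ Continuous (fun x => left (h x)) ∧ Continuous (fun x => right (h x)) :=
  continuous_induced_rng.trans continuous_prodMk

theorem continuous_left : Continuous (left (p := p)) :=
  (continuous_iff.1 (continuous_id (X := Bp p))).1

theorem continuous_right : Continuous (right (p := p)) :=
  (continuous_iff.1 (continuous_id (X := Bp p))).2

theorem continuous_inl : Continuous (inl (p := p)) :=
  continuous_iff.2 ⟨continuous_id, continuous_const⟩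

theorem continuous_phiP {X : Type*} [TopologicalSpace X] {a : X → Multiplicative ℤ}
    {b : X → Multiplicative ℚ_[p]} (ha : Continuous a) (hb : Continuous b) :
    Continuous fun x => phiP p (a x) (b x) := by
  have h : (fun x => phiP p (a x) (b x)) =
      fun x => ofAdd ((p : ℚ_[p]) ^ (a x).toAdd * (b x).toAdd) :=
    funext fun x => toAdd.injective (toAdd_phiP_apply _ _)
  rw [h]
  exact continuous_ofAdd.comp ((continuous_of_discreteTopology.comp ha).mul
    (continuous_toAdd.comp hb))

instance : IsTopologicalGroup (Bp p) where
  continuous_mul := by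
    refine continuous_iff.2 ⟨?_, ?_⟩
    · simp only [left_mul]
      exact continuous_left.fst'.mul (continuous_phiP continuous_right.fst' continuous_left.snd')
    · simp only [map_mul]
      exact continuous_right.fst'.mul continuous_right.snd'
  continuous_inv := by
    refine continuous_iff.2 ⟨?_, ?_⟩
    · simp only [left_inv]
      exact continuous_phiP continuous_right.inv continuous_left.inv
    · simp only [map_inv]
      exact continuous_right.inv

theorem injective_of_injective_comp_inl {G : Type*} [Group G] (f : Bp p →* G)
    (hF : Function.Injective (f.comp inl)) : Function.Injective f := by
  refine (injective_iff_map_eq_one f).2 fun g hg => ?_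
  have hpow : (p : ℚ_[p]) ^ (right g).toAdd = 1 := by
    have h := map_inl_zpow_mul f g 1
    simp only [hg, one_mul, inv_one, mul_one] at h
    simpa using congrArg toAdd (hF h)
  have hright : right g = 1 := by
    have hnorm := congrArg norm hpow
    rw [Padic.norm_p_zpow, norm_one, zpow_eq_one_iff_right₀ (by positivity)
      (by exact_mod_cast (Fact.out : p.Prime).one_lt.ne'), neg_eq_zero] at hnorm
    exact toAdd.injective hnorm
  have hleft : left g = 1 := hF (by simpa [inl_left_of_right_eq_one hright] using hg)
  rw [← inl_left_of_right_eq_one hright, hleft, map_one]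

theorem injective_comp_inl {G : Type*} [Group G] [TopologicalSpace G] [T1Space G]
    (f : Bp p →* G) (hf : Continuous f) (hF : f.comp inl ≠ 1) :
    Function.Injective (f.comp inl) := by
  set H := (f.comp inl).ker.toAddSubgroup'
  have hH : IsClosed (H : Set ℚ_[p]) :=
    (isClosed_singleton.preimage (hf.comp continuous_inl)).preimage continuous_ofAdd
  have hstab (y : ℚ_[p]) (hy : y ∈ H) : (p : ℚ_[p])⁻¹ * y ∈ H := by
    have h := map_inl_zpow_mul f (inr (ofAdd (-1))) y
    simp only [right_inr, toAdd_ofAdd, zpow_neg_one] at h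
    simp_all [H]
  refine (injective_iff_map_eq_one _).2 fun x hx => ?_
  by_contra hx1
  have htop : H = ⊤ := Padic.eq_top_of_isClosed_of_not_isBounded hH
    (H.not_isBounded_of_mul_mem (x := x.toAdd) hx (by simpa using hx1)
      (by simpa using (Fact.out : p.Prime).one_lt) hstab)
  refine hF (MonoidHom.ext fun y => ?_)
  have hy : y.toAdd ∈ H := htop ▸ AddSubgroup.mem_top _
  simpa [H] using hy

section OpenSubgroup

variable {G : Type*} [Group G] [TopologicalSpace G] {f : Bp p →* G} {U : Subgroup G}

theorem isOpen_comap_inl (hf : Continuous f) (hU : IsOpen (U : Set G)) :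
    IsOpen ((U.comap (f.comp inl)).toAddSubgroup' : Set ℚ_[p]) :=
  (hU.preimage (hf.comp continuous_inl)).preimage continuous_ofAdd

theorem right_eq_one_of_map_mem [IsTopologicalGroup G] (hf : Continuous f)
    (hU : IsOpen (U : Set G)) (hUF : U.comap (f.comp inl) ≠ ⊤) {g : Bp p} (hg : f g ∈ U) :
    right g = 1 := by
  set W := (U.comap (f.comp inl)).toAddSubgroup'
  have hWo : IsOpen (W : Set ℚ_[p]) := isOpen_comap_inl hf hU
  have hstab (h : Bp p) (hh : f h ∈ U) (y : ℚ_[p]) (hy : y ∈ W) :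
      (p : ℚ_[p]) ^ (right h).toAdd * y ∈ W := by
    simp only [W, Subgroup.mem_toAddSubgroup', Subgroup.mem_comap, MonoidHom.comp_apply,
      map_inl_zpow_mul] at hy ⊢
    exact U.mul_mem (U.mul_mem hh hy) (U.inv_mem hh)
  by_contra hg1
  obtain ⟨h, hh, hneg⟩ : ∃ h : Bp p, f h ∈ U ∧ (right h).toAdd < 0 := by
    rcases lt_or_gt_of_ne (fun h0 => hg1 (toAdd.injective h0) : (right g).toAdd ≠ 0)
      with hlt | hgt
    · exact ⟨g, hg, hlt⟩
    · exact ⟨g⁻¹, by simpa using U.inv_mem hg, by simpa using hgt⟩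
  obtain ⟨w, hwW, hw0⟩ := W.exists_ne_zero_mem_of_isOpen hWo
  have hc : 1 < ‖(p : ℚ_[p]) ^ (right h).toAdd‖ := by
    rw [Padic.norm_p_zpow]
    exact one_lt_zpow₀ (by exact_mod_cast (Fact.out : p.Prime).one_lt) (by omega)
  exact mt (map_eq_top_iff _).1 hUF <| Padic.eq_top_of_isClosed_of_not_isBounded
    (W.isClosed_of_isOpen hWo) (W.not_isBounded_of_mul_mem hwW hw0 hc (hstab h hh))

theorem isCompact_preimage [IsTopologicalGroup G] (hf : Continuous f) (hU : IsOpen (U : Set G))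
    (hUF : U.comap (f.comp inl) ≠ ⊤) : IsCompact (f ⁻¹' U) := by
  set W := (U.comap (f.comp inl)).toAddSubgroup'
  have hWc : IsClosed (W : Set ℚ_[p]) := W.isClosed_of_isOpen (isOpen_comap_inl hf hU)
  have hWb : IsBounded (W : Set ℚ_[p]) := not_not.1 fun hb =>
    mt (map_eq_top_iff _).1 hUF (Padic.eq_top_of_isClosed_of_not_isBounded hWc hb)
  refine (((Metric.isCompact_of_isClosed_isBounded hWc hWb).image continuous_ofAdd).image
    continuous_inl).of_isClosed_subset ((U.isClosed_of_isOpen hU).preimage hf) fun g hg => ?_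
  have hg' := inl_left_of_right_eq_one (right_eq_one_of_map_mem hf hU hUF hg)
  refine ⟨left g, ⟨(left g).toAdd, ?_, rfl⟩, hg'⟩
  simpa [W, hg'] using hg

end OpenSubgroup

end Bp

/-- Let `B_p = ℚ_p ⋊ ℤ`, where the generator of `ℤ` acts on `ℚ_p` by
multiplication by `p`.  Every continuous homomorphism `f : B_p → G` to a totally
disconnected locally compact group `G` either restricts trivially to `ℚ_p`, or is a
topological isomorphism onto its closed image (in particular `f` is proper). -/
theorem stmt5 {p : ℕ} [Fact p.Prime] {G : Type*} [Group G] [TopologicalSpace G]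
    [IsTopologicalGroup G] [LocallyCompactSpace G] [TotallyDisconnectedSpace G]
    (f : Bp p →* G) (hf : Continuous f) :
    (∀ x : Multiplicative ℚ_[p], f (SemidirectProduct.inl x) = 1) ∨
      (IsClosedEmbedding (⇑f) ∧ IsProperMap (⇑f)) := by
  by_cases hF : f.comp Bp.inl = 1
  · exact .inl fun x => DFunLike.congr_fun hF x
  obtain ⟨U, hUo, hUc, -⟩ := exists_isOpen_isCompact_subgroup_subset (univ_mem (f := 𝓝 (1 : G)))
  have hUF : U.comap (f.comp Bp.inl) ≠ ⊤ := fun h => hF <|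
    (f.comp Bp.inl).eq_one_of_range_subset_isCompact hUc (Set.range_subset_iff.2 fun x =>
      (h ▸ Subgroup.mem_top x : x ∈ U.comap (f.comp Bp.inl)))
  have hproper := f.isProperMap_of_isCompact_preimage hf hUo (Bp.isCompact_preimage hf hUo hUF)
  exact .inr ⟨.of_continuous_injective_isClosedMap hf
    (Bp.injective_of_injective_comp_inl f (Bp.injective_comp_inl f hf hF)) hproper.isClosedMap,
    hproper⟩
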